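/- arXiv:2008.09921 — 7 statements merged into one kernel-verified Lean document; each statement's English description precedes it below -/
import Mathlib

section
/- Let G, H be digraphs with list function L such that G ×_L H^3 admits a Maltsev list polymorphism. Suppose the lists are arc- and pair-consistent, and suppose (a,c), (b,c), (b,d) all belong to the pair list L(x,y) for vertices x, y of G. Then (a,d) ∈ L(x,y). -/
/-- A walk of length `ℓ` following the orientation pattern `ε`. -/
def IsWalkOn {V : Type*} (A : V → V → Prop) (ℓ : ℕ) (ε : ℕ → Bool) (w : ℕ → V) : Prop :=
  ∀ i, i + 1 < ℓ → (if ε i then A (w i) (w (i + 1)) else A (w (i + 1)) (w i))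

/-- A Maltsev list polymorphism on `G ×_L H³`. -/
def IsMaltsevListPoly {VG VH : Type*} (AG : VG → VG → Prop) (AH : VH → VH → Prop)
    (L : VG → Set VH) (h : VG → VH → VH → VH → VH) : Prop :=
  (∀ x a₁ a₂ a₃, a₁ ∈ L x → a₂ ∈ L x → a₃ ∈ L x → h x a₁ a₂ a₃ ∈ L x) ∧
  (∀ x y a₁ a₂ a₃ b₁ b₂ b₃, AG x y → a₁ ∈ L x → a₂ ∈ L x → a₃ ∈ L x →
      b₁ ∈ L y → b₂ ∈ L y → b₃ ∈ L y → AH a₁ b₁ → AH a₂ b₂ → AH a₃ b₃ →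
      AH (h x a₁ a₂ a₃) (h y b₁ b₂ b₃)) ∧
  (∀ x a b, a ∈ L x → b ∈ L x → h x a b b = a ∧ h x b b a = a)

/-- `(a,b)` belongs to the pair list `L(x,y)`: for every oriented walk in `G` from `x`
to `y` there is a congruent walk in `H` from `a` to `b` staying inside the lists. -/
def InPairList {VG VH : Type*} (AG : VG → VG → Prop) (AH : VH → VH → Prop)
    (L : VG → Set VH) (x y : VG) (a b : VH) : Prop :=
  ∀ (ℓ : ℕ) (ε : ℕ → Bool) (w : ℕ → VG), 1 ≤ ℓ → IsWalkOn AG ℓ ε w →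
    w 0 = x → w (ℓ - 1) = y →
    ∃ p : ℕ → VH, IsWalkOn AH ℓ ε p ∧ (∀ i, i < ℓ → p i ∈ L (w i)) ∧
      p 0 = a ∧ p (ℓ - 1) = b

/-!
Apply `h` coordinatewise to three list walks lifting the same walk from `x` to `y`, starting at `a, b, b`
and ending at `c, c, d`: the result is again such a lift, and the Maltsev identities
`h(x; a, b, b) = a`, `h(y; c, c, d) = d` fix its endpoints.
-/

def IsListLift {VG VH : Type*} (AH : VH → VH → Prop) (L : VG → Set VH) (ℓ : ℕ)
    (ε : ℕ → Bool) (w : ℕ → VG) (p : ℕ → VH) : Prop :=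
  IsWalkOn AH ℓ ε p ∧ ∀ i, i < ℓ → p i ∈ L (w i)

namespace IsMaltsevListPoly

variable {VG VH : Type*} {AG : VG → VG → Prop} {AH : VH → VH → Prop} {L : VG → Set VH}
  {h : VG → VH → VH → VH → VH} {ℓ : ℕ} {ε : ℕ → Bool} {w : ℕ → VG} {p₁ p₂ p₃ : ℕ → VH}

theorem isListLift_apply (hML : IsMaltsevListPoly AG AH L h) (hw : IsWalkOn AG ℓ ε w)
    (h₁ : IsListLift AH L ℓ ε w p₁) (h₂ : IsListLift AH L ℓ ε w p₂)
    (h₃ : IsListLift AH L ℓ ε w p₃) :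
    IsListLift AH L ℓ ε w (fun i => h (w i) (p₁ i) (p₂ i) (p₃ i)) := by
  obtain ⟨hmem, harc, -⟩ := hML
  refine ⟨fun i hi => ?_, fun i hi => hmem _ _ _ _ (h₁.2 i hi) (h₂.2 i hi) (h₃.2 i hi)⟩
  have hi₀ : i < ℓ := by omega
  have hG := hw i hi
  have hH₁ := h₁.1 i hi
  have hH₂ := h₂.1 i hi
  have hH₃ := h₃.1 i hi
  cases hε : ε i <;> simp only [hε, if_true, Bool.false_eq_true, if_false] at hG hH₁ hH₂ hH₃ ⊢
  · exact harc _ _ _ _ _ _ _ _ hG (h₁.2 _ hi) (h₂.2 _ hi) (h₃.2 _ hi)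
      (h₁.2 _ hi₀) (h₂.2 _ hi₀) (h₃.2 _ hi₀) hH₁ hH₂ hH₃
  · exact harc _ _ _ _ _ _ _ _ hG (h₁.2 _ hi₀) (h₂.2 _ hi₀) (h₃.2 _ hi₀)
      (h₁.2 _ hi) (h₂.2 _ hi) (h₃.2 _ hi) hH₁ hH₂ hH₃

end IsMaltsevListPoly

theorem pair_list_rectangular_general {VG VH : Type*} (AG : VG → VG → Prop) (AH : VH → VH → Prop)
    (L : VG → Set VH) (h : VG → VH → VH → VH → VH)
    (hML : IsMaltsevListPoly AG AH L h)
    (x y : VG) (a b c d : VH)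
    (hac : InPairList AG AH L x y a c)
    (hbc : InPairList AG AH L x y b c)
    (hbd : InPairList AG AH L x y b d) :
    InPairList AG AH L x y a d := by
  intro ℓ ε w hℓ hw hw₀ hwℓ
  obtain ⟨p₁, hp₁, hL₁, rfl, rfl⟩ := hac ℓ ε w hℓ hw hw₀ hwℓ
  obtain ⟨p₂, hp₂, hL₂, hp₂₀, hp₂ℓ⟩ := hbc ℓ ε w hℓ hw hw₀ hwℓ
  obtain ⟨p₃, hp₃, hL₃, rfl, rfl⟩ := hbd ℓ ε w hℓ hw hw₀ hwℓ
  have hlast : ℓ - 1 < ℓ := by omega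
  obtain ⟨hwalk, hlists⟩ := hML.isListLift_apply hw ⟨hp₁, hL₁⟩ ⟨hp₂, hL₂⟩ ⟨hp₃, hL₃⟩
  refine ⟨_, hwalk, hlists, ?_, ?_⟩
  · rw [hp₂₀]
    exact (hML.2.2 _ _ _ (hL₁ 0 hℓ) (hL₃ 0 hℓ)).1
  · rw [hp₂ℓ]
    exact (hML.2.2 _ _ _ (hL₃ _ hlast) (hL₁ _ hlast)).2

/-- Corollary: rectangle property of pair lists. In presence of a Maltsev
list polymorphism, `(a,c), (b,c), (b,d) ∈ L(x,y)` imply `(a,d) ∈ L(x,y)`. -/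
theorem pair_list_rectangular {VG VH : Type*} (AG : VG → VG → Prop) (AH : VH → VH → Prop)
    (L : VG → Set VH) (h : VG → VH → VH → VH → VH)
    (hML : IsMaltsevListPoly AG AH L h)
    (x y : VG) (a b c d : VH)
    (ha : a ∈ L x) (hb : b ∈ L x) (hc : c ∈ L y) (hd : d ∈ L y)
    (hac : InPairList AG AH L x y a c)
    (hbc : InPairList AG AH L x y b c)
    (hbd : InPairList AG AH L x y b d) :
    InPairList AG AH L x y a d :=
  pair_list_rectangular_general AG AH L h hML x y a b c d hac hbc hbd
end

section
/- There exist digraphs G, H and a list function L : V(G) → 2^{V(H)} such that G ×_L H^3 admits a Maltsev list polymorphism, but G ×_L H^3 admits no majority list polymorphism. Concretely, one may take G with vertices {x,y,z,w} and H with 10 vertices as in Example 1 of the paper. -/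
/-- A majority list polymorphism on `G ×_L H³`. -/
def IsMajorityListPoly {VG VH : Type*} (AG : VG → VG → Prop) (AH : VH → VH → Prop)
    (L : VG → Set VH) (g : VG → VH → VH → VH → VH) : Prop :=
  (∀ x a₁ a₂ a₃, a₁ ∈ L x → a₂ ∈ L x → a₃ ∈ L x → g x a₁ a₂ a₃ ∈ L x) ∧
  (∀ x y a₁ a₂ a₃ b₁ b₂ b₃, AG x y → a₁ ∈ L x → a₂ ∈ L x → a₃ ∈ L x →
      b₁ ∈ L y → b₂ ∈ L y → b₃ ∈ L y → AH a₁ b₁ → AH a₂ b₂ → AH a₃ b₃ →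
      AH (g x a₁ a₂ a₃) (g y b₁ b₂ b₃)) ∧
  (∀ x a b, a ∈ L x → b ∈ L x → g x a b b = b ∧ g x b a b = b ∧ g x b b a = b)

section Transport

variable {VG VG' VH VH' : Type*} {AG' : VG' → VG' → Prop} {AH' : VH' → VH' → Prop}
  {L' : VG' → Set VH'} (e : VG ≃ VG') (f : VH ≃ VH')

theorem IsMaltsevListPoly.comap {h : VG' → VH' → VH' → VH' → VH'}
    (hh : IsMaltsevListPoly AG' AH' L' h) :
    IsMaltsevListPoly (fun x y => AG' (e x) (e y)) (fun a b => AH' (f a) (f b))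
      (fun x => f ⁻¹' L' (e x)) (fun x a₁ a₂ a₃ => f.symm (h (e x) (f a₁) (f a₂) (f a₃))) := by
  obtain ⟨hmem, harc, hid⟩ := hh
  refine ⟨fun x a₁ a₂ a₃ h₁ h₂ h₃ => ?_, fun x y a₁ a₂ a₃ b₁ b₂ b₃ hxy ha₁ ha₂ ha₃ hb₁ hb₂ hb₃
    e₁ e₂ e₃ => ?_, fun x a b ha hb => ?_⟩
  · simpa using hmem _ _ _ _ h₁ h₂ h₃
  · simpa using harc _ _ _ _ _ _ _ _ hxy ha₁ ha₂ ha₃ hb₁ hb₂ hb₃ e₁ e₂ e₃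
  · simp [(hid _ _ _ ha hb).1, (hid _ _ _ ha hb).2]

theorem IsMajorityListPoly.of_comap {g : VG → VH → VH → VH → VH}
    (hg : IsMajorityListPoly (fun x y => AG' (e x) (e y)) (fun a b => AH' (f a) (f b))
      (fun x => f ⁻¹' L' (e x)) g) :
    IsMajorityListPoly AG' AH' L'
      (fun x a₁ a₂ a₃ => f (g (e.symm x) (f.symm a₁) (f.symm a₂) (f.symm a₃))) := by
  obtain ⟨hmem, harc, hid⟩ := hg
  refine ⟨fun x a₁ a₂ a₃ h₁ h₂ h₃ => ?_, fun x y a₁ a₂ a₃ b₁ b₂ b₃ hxy ha₁ ha₂ ha₃ hb₁ hb₂ hb₃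
    e₁ e₂ e₃ => ?_, fun x a b ha hb => ?_⟩
  · simpa using hmem (e.symm x) (f.symm a₁) (f.symm a₂) (f.symm a₃) (by simpa) (by simpa)
      (by simpa)
  · refine harc (e.symm x) (e.symm y) _ _ _ _ _ _ ?_ ?_ ?_ ?_ ?_ ?_ ?_ ?_ ?_ ?_ <;> simpa
  · have := hid (e.symm x) (f.symm a) (f.symm b) (by simpa) (by simpa)
    simp [this.1, this.2.1, this.2.2]

end Transport

theorem IsMajorityListPoly.apply_eq_of_two_eq {VG VH : Type*} {AG : VG → VG → Prop}
    {AH : VH → VH → Prop} {L : VG → Set VH} {g : VG → VH → VH → VH → VH}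
    (hg : IsMajorityListPoly AG AH L g) {x : VG} {a₁ a₂ a₃ b : VH}
    (h₁ : a₁ ∈ L x) (h₂ : a₂ ∈ L x) (h₃ : a₃ ∈ L x)
    (h : a₁ = b ∧ a₂ = b ∨ a₁ = b ∧ a₃ = b ∨ a₂ = b ∧ a₃ = b) : g x a₁ a₂ a₃ = b := by
  rcases h with ⟨rfl, rfl⟩ | ⟨rfl, rfl⟩ | ⟨rfl, rfl⟩
  exacts [(hg.2.2 x _ _ h₃ h₁).2.2, (hg.2.2 x _ _ h₂ h₁).2.1, (hg.2.2 x _ _ h₁ h₂).1]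

namespace CodeInstance

variable {ι A : Type*} (C : Set (ι → A))

/-- Vertices of `H`: a pair `(i, a)` stands for the symbol `a` at leaf `i`. -/
abbrev Vertex := (ι × A) ⊕ C

/-- `some i` is leaf `i` and `none` is the centre. -/
def adjG : Option ι → Option ι → Prop
  | some _, none => True
  | _, _ => False

def adjH : Vertex C → Vertex C → Prop
  | .inl (i, a), .inr c => c.1 i = a
  | _, _ => False

def list : Option ι → Set (Vertex C)
  | some i => Set.range fun a => .inl (i, a)
  | none => Set.range .inr

variable {C} (μ : A → A → A → A)
  (hC : ∀ c₁ ∈ C, ∀ c₂ ∈ C, ∀ c₃ ∈ C, (fun i => μ (c₁ i) (c₂ i) (c₃ i)) ∈ C)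

def liftOp : Vertex C → Vertex C → Vertex C → Vertex C
  | .inl (i, a), .inl (_, b), .inl (_, c) => .inl (i, μ a b c)
  | .inr c₁, .inr c₂, .inr c₃ => .inr ⟨_, hC _ c₁.2 _ c₂.2 _ c₃.2⟩
  | a, _, _ => a

theorem isMaltsevListPoly_liftOp (hμ : ∀ a b, μ a b b = a ∧ μ b b a = a) :
    IsMaltsevListPoly adjG (adjH C) (list C) (fun _ => liftOp μ hC) := by
  refine ⟨fun x a₁ a₂ a₃ h₁ h₂ h₃ => ?_, fun x y a₁ a₂ a₃ b₁ b₂ b₃ hxy ha₁ ha₂ ha₃ hb₁ hb₂ hb₃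
    e₁ e₂ e₃ => ?_, fun x a b ha hb => ?_⟩
  · cases x <;> obtain ⟨a₁, rfl⟩ := h₁ <;> obtain ⟨a₂, rfl⟩ := h₂ <;> obtain ⟨a₃, rfl⟩ := h₃
    exacts [⟨_, rfl⟩, ⟨_, rfl⟩]
  · match x, y, hxy with
    | some i, none, _ =>
      obtain ⟨a₁, rfl⟩ := ha₁; obtain ⟨a₂, rfl⟩ := ha₂; obtain ⟨a₃, rfl⟩ := ha₃
      obtain ⟨c₁, rfl⟩ := hb₁; obtain ⟨c₂, rfl⟩ := hb₂; obtain ⟨c₃, rfl⟩ := hb₃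
      simp only [adjH] at e₁ e₂ e₃
      simp only [liftOp, adjH, e₁, e₂, e₃]
  · cases x <;> obtain ⟨a, rfl⟩ := ha <;> obtain ⟨b, rfl⟩ := hb <;>
      simp only [liftOp, hμ, and_self]

theorem not_exists_isMajorityListPoly {c₁ c₂ c₃ m : ι → A} (h₁ : c₁ ∈ C) (h₂ : c₂ ∈ C)
    (h₃ : c₃ ∈ C) (hm : m ∉ C)
    (hmaj : ∀ i, c₁ i = m i ∧ c₂ i = m i ∨ c₁ i = m i ∧ c₃ i = m i ∨ c₂ i = m i ∧ c₃ i = m i) :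
    ¬ ∃ g, IsMajorityListPoly adjG (adjH C) (list C) g := by
  rintro ⟨g, hg⟩
  obtain ⟨c, hc⟩ := hg.1 none (.inr ⟨c₁, h₁⟩) (.inr ⟨c₂, h₂⟩) (.inr ⟨c₃, h₃⟩) ⟨_, rfl⟩ ⟨_, rfl⟩
    ⟨_, rfl⟩
  have hcm : c.1 = m := funext fun i => by
    have hleaf : g (some i) (.inl (i, c₁ i)) (.inl (i, c₂ i)) (.inl (i, c₃ i)) = .inl (i, m i) :=
      hg.apply_eq_of_two_eq ⟨_, rfl⟩ ⟨_, rfl⟩ ⟨_, rfl⟩ (by simpa using hmaj i)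
    have harc := hg.2.1 (some i) none _ _ _ (.inr ⟨c₁, h₁⟩) (.inr ⟨c₂, h₂⟩) (.inr ⟨c₃, h₃⟩)
      trivial ⟨_, rfl⟩ ⟨_, rfl⟩ ⟨_, rfl⟩ ⟨_, rfl⟩ ⟨_, rfl⟩ ⟨_, rfl⟩ rfl rfl rfl
    rwa [hleaf, ← hc] at harc
  exact hm (hcm ▸ c.2)

end CodeInstance

abbrev evenWeightCode : Set (Fin 3 → ZMod 2) := {c | ∑ i, c i = 0}

theorem sub_add_mem_evenWeightCode :
    ∀ c₁ ∈ evenWeightCode, ∀ c₂ ∈ evenWeightCode, ∀ c₃ ∈ evenWeightCode,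
      (fun i => c₁ i - c₂ i + c₃ i) ∈ evenWeightCode := by
  intro c₁ h₁ c₂ h₂ c₃ h₃
  simp_all [Finset.sum_add_distrib, Finset.sum_sub_distrib]

/-- there is an instance (with `G` on 4 vertices and `H` on 10 vertices)
admitting a Maltsev list polymorphism on `G ×_L H³` but no majority list polymorphism. -/
theorem exists_maltsev_no_majority :
    ∃ (AG : Fin 4 → Fin 4 → Prop) (AH : Fin 10 → Fin 10 → Prop)
      (L : Fin 4 → Set (Fin 10)),
      (∃ h, IsMaltsevListPoly AG AH L h) ∧ ¬ ∃ g, IsMajorityListPoly AG AH L g := by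
  let e : Fin 4 ≃ Option (Fin 3) := Fintype.equivOfCardEq (by simp)
  let f : Fin 10 ≃ CodeInstance.Vertex evenWeightCode := Fintype.equivOfCardEq (by decide)
  have hmaltsev := (CodeInstance.isMaltsevListPoly_liftOp (fun a b c => a - b + c)
    sub_add_mem_evenWeightCode fun a b => by simp).comap e f
  refine ⟨_, _, _, ⟨_, hmaltsev⟩, fun ⟨g, hg⟩ => ?_⟩
  exact CodeInstance.not_exists_isMajorityListPoly (c₁ := ![0, 1, 1]) (c₂ := ![1, 0, 1])
    (c₃ := ![1, 1, 0]) (m := 1) (by decide) (by decide) (by decide) (by decide) (by decide)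
    ⟨_, hg.of_comap e f⟩
end

section
/- Under the reduction from hypergraph list homomorphism to graph list homomorphism via signatures, if the hypergraph ℋ admits a polymorphism h of arity r that is closed on each list ℒ(α) (i.e., applying h coordinatewise to any r hyperedges of ℒ(α) yields a hyperedge of ℒ(α)), then the constructed instance G, H, L admits a list polymorphism φ of arity r on G ×_L H^r given by φ(ᾱ; τ̄_1,...,τ̄_r) = overline{h(τ_1,...,τ_r)}. -/
/-- The signature of two ordered tuples (lists). -/
def Sig {X : Type*} (α β : List X) : Set (ℕ × ℕ) :=
  {p | ∃ v, α[p.1]? = some v ∧ β[p.2]? = some v}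

/-- Coordinatewise application of an `r`-ary operation `h` to `r` lists,
producing a list of length `n`. -/
def hApplyL {A : Type*} [Inhabited A] {r : ℕ} (h : (Fin r → A) → A)
    (ts : Fin r → List A) (n : ℕ) : List A :=
  (List.range n).map fun i => h fun j => (ts j).getD i default

lemma getD_eq_getD_of_mem_Sig {A : Type*} {τ ω : List A} {p : ℕ × ℕ} (hp : p ∈ Sig τ ω)
    (d : A) : τ.getD p.1 d = ω.getD p.2 d := by
  obtain ⟨v, hτ, hω⟩ := hp
  simp only [List.getD_eq_getElem?_getD, hτ, hω]

lemma lt_length_of_mem_Sig {X : Type*} {α β : List X} {p : ℕ × ℕ} (hp : p ∈ Sig α β) :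
    p.1 < α.length ∧ p.2 < β.length := by
  obtain ⟨v, hα, hβ⟩ := hp
  exact ⟨(List.getElem?_eq_some_iff.mp hα).1, (List.getElem?_eq_some_iff.mp hβ).1⟩

section hApplyL

variable {A : Type*} [Inhabited A] {r : ℕ} (h : (Fin r → A) → A)

lemma getElem?_hApplyL (ts : Fin r → List A) {n i : ℕ} (hi : i < n) :
    (hApplyL h ts n)[i]? = some (h fun j => (ts j).getD i default) := by
  simp [hApplyL, List.getElem?_map, List.getElem?_range hi]

lemma mem_Sig_hApplyL {ts us : Fin r → List A} {m n : ℕ} {p : ℕ × ℕ} (hm : p.1 < m)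
    (hn : p.2 < n) (hp : ∀ k, p ∈ Sig (ts k) (us k)) :
    p ∈ Sig (hApplyL h ts m) (hApplyL h us n) := by
  refine ⟨_, getElem?_hApplyL h ts hm, ?_⟩
  rw [getElem?_hApplyL h us hn]
  simp only [fun k => getD_eq_getD_of_mem_Sig (hp k) default]

lemma Sig_subset_Sig_hApplyL {X : Type*} {α β : List X} {ts us : Fin r → List A}
    (hsub : ∀ k, Sig α β ⊆ Sig (ts k) (us k)) :
    Sig α β ⊆ Sig (hApplyL h ts α.length) (hApplyL h us β.length) := fun _ hp =>
  mem_Sig_hApplyL h (lt_length_of_mem_Sig hp).1 (lt_length_of_mem_Sig hp).2 fun k => hsub k hp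

end hApplyL

theorem hypergraph_poly_transfers_general {X A : Type*} [Inhabited A] {r : ℕ}
    (𝒢 : Set (List X)) (ℒ : List X → Set (List A))
    (h : (Fin r → A) → A)
    (hclosed : ∀ α ∈ 𝒢, ∀ ts : Fin r → List A, (∀ j, ts j ∈ ℒ α) →
      hApplyL h ts α.length ∈ ℒ α) :
    ∃ φ : (x : {l : List X // l ∈ 𝒢}) →
        (Fin r → {t : List A // t ∈ ℒ x.val}) → {t : List A // t ∈ ℒ x.val},
      (∀ x ts, (φ x ts).val = hApplyL h (fun j => (ts j).val) x.val.length) ∧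
      (∀ (x y : {l : List X // l ∈ 𝒢})
        (ts : Fin r → {t : List A // t ∈ ℒ x.val})
        (us : Fin r → {t : List A // t ∈ ℒ y.val}),
        (Sig x.val y.val).Nonempty →
        (∀ j, Sig x.val y.val ⊆ Sig (ts j).val (us j).val) →
        Sig x.val y.val ⊆ Sig (φ x ts).val (φ y us).val) :=
  ⟨fun x ts => ⟨hApplyL h (fun j => (ts j).val) x.val.length,
      hclosed x.val x.prop _ fun j => (ts j).prop⟩,
    fun _ _ => rfl, fun _ _ _ _ _ hsub => Sig_subset_Sig_hApplyL h hsub⟩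

/-- if the hypergraph lists are closed under an `r`-ary polymorphism `h`
(coordinatewise), then the signature-based graph instance `G, H, L` admits the list
polymorphism `φ(ᾱ; τ̄₁,…,τ̄ᵣ) = h(τ₁,…,τᵣ)` of arity `r` on `G ×_L H^r`:
`φ` maps tuples from each list into the list and preserves edges. -/
theorem hypergraph_poly_transfers {X A : Type*} [Inhabited A] {r : ℕ} [NeZero r]
    (𝒢 : Set (List X)) (ℒ : List X → Set (List A))
    (hlen : ∀ α ∈ 𝒢, ∀ τ ∈ ℒ α, τ.length = α.length)
    (h : (Fin r → A) → A)
    (hclosed : ∀ α ∈ 𝒢, ∀ ts : Fin r → List A, (∀ j, ts j ∈ ℒ α) →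
      hApplyL h ts α.length ∈ ℒ α) :
    ∃ φ : (x : {l : List X // l ∈ 𝒢}) →
        (Fin r → {t : List A // t ∈ ℒ x.val}) → {t : List A // t ∈ ℒ x.val},
      (∀ x ts, (φ x ts).val = hApplyL h (fun j => (ts j).val) x.val.length) ∧
      (∀ (x y : {l : List X // l ∈ 𝒢})
        (ts : Fin r → {t : List A // t ∈ ℒ x.val})
        (us : Fin r → {t : List A // t ∈ ℒ y.val}),
        (Sig x.val y.val).Nonempty →
        (∀ j, Sig x.val y.val ⊆ Sig (ts j).val (us j).val) →
        Sig x.val y.val ⊆ Sig (φ x ts).val (φ y us).val) :=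
  hypergraph_poly_transfers_general 𝒢 ℒ h hclosed
end

section
/- In the construction of graphs G, H, L from a hypergraph ℋ for recognizing Maltsev polymorphisms (vertices of G are triples (α,β,γ) of hyperedges from the same uniform part ℋ_l; lists encode Maltsev constraints), ℋ admits a Maltsev polymorphism if and only if there exists an L-homomorphism from G to H. -/
/-- The Maltsev-constraint list conditions: `τ ∈ L((α,β,γ))` requires
(i) if `α[i]=β[i]=γ[i]=a` then `τ[i]=a`, (ii) if `α[i]=β[i]` then `τ[i]=γ[i]`,
(iii) if `β[i]=γ[i]` then `τ[i]=α[i]`. -/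
def MaltsevListCond {A : Type*} (α β γ τ : List A) : Prop :=
  (∀ (i : ℕ) (a : A), α[i]? = some a → β[i]? = some a → γ[i]? = some a → τ[i]? = some a) ∧
  (∀ i : ℕ, α[i]? = β[i]? → τ[i]? = γ[i]?) ∧
  (∀ i : ℕ, β[i]? = γ[i]? → τ[i]? = α[i]?)

/-!
If `h` is a Maltsev polymorphism, sending a vertex `(α, β, γ)` of `G` to `zipWith3 h α β γ` is
an `L`-homomorphism: the Maltsev identities give the list conditions, and equal columns of the
source triples give equal entries of the images. Conversely, an `L`-homomorphism `g` defines an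
operation column by column: `h a b c` is the entry of `g x` at any position `i` where the triple
`x` has the column `(a, b, c)`. This does not depend on the choice of `(x, i)`, because two such
occurrences `(x, i)`, `(y, j)` make `x` and `y` adjacent with `(i, j)` in all three signatures.
The list conditions then give the Maltsev identities, and on a triple of hyperedges of `ℋ l` the
operation reproduces `g`, whose value lies in `ℋ l`.
-/

namespace List

variable {α β γ δ : Type*}

theorem getElem?_zipWith3 (f : α → β → γ → δ) (l₁ : List α) (l₂ : List β) (l₃ : List γ)
    (i : ℕ) :
    (zipWith3 f l₁ l₂ l₃)[i]? = l₁[i]?.bind fun a => l₂[i]?.bind fun b => l₃[i]?.map (f a b) := by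
  induction l₁ generalizing l₂ l₃ i <;> cases l₂ <;> cases l₃ <;> cases i <;> simp [zipWith3, *]

theorem getElem?_zipWith3_of_eq_some {f : α → β → γ → δ} {l₁ : List α} {l₂ : List β}
    {l₃ : List γ} {i : ℕ} {a : α} {b : β} {c : γ} (h₁ : l₁[i]? = some a) (h₂ : l₂[i]? = some b)
    (h₃ : l₃[i]? = some c) : (zipWith3 f l₁ l₂ l₃)[i]? = some (f a b c) := by
  simp [getElem?_zipWith3, h₁, h₂, h₃]

theorem getElem?_eq_none_or_exists_of_length_eq {l₁ l₂ l₃ : List α}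
    (h₂ : l₂.length = l₁.length) (h₃ : l₃.length = l₁.length) (i : ℕ) :
    (l₁[i]? = none ∧ l₂[i]? = none ∧ l₃[i]? = none) ∨
      ∃ a b c, l₁[i]? = some a ∧ l₂[i]? = some b ∧ l₃[i]? = some c := by
  by_cases hi : i < l₁.length
  · exact .inr ⟨_, _, _, getElem?_eq_getElem hi, getElem?_eq_getElem (h₂ ▸ hi),
      getElem?_eq_getElem (h₃ ▸ hi)⟩
  · left
    simp only [getElem?_eq_none_iff]
    omega

end List

open List

section Maltsev

variable {A : Type*}

def IsMaltsevOperation (h : A → A → A → A) : Prop :=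
  ∀ a b : A, h a b b = a ∧ h b b a = a

open Classical in
noncomputable def defaultMaltsevOperation (a b c : A) : A :=
  if b = c then a else c

theorem isMaltsevOperation_defaultMaltsevOperation :
    IsMaltsevOperation (defaultMaltsevOperation : A → A → A → A) := by
  intro a b
  constructor
  · simp [defaultMaltsevOperation]
  · rw [defaultMaltsevOperation]
    split_ifs with hba
    exacts [hba, rfl]

theorem MaltsevListCond.of_left_of_right {α β γ τ : List A}
    (hleft : ∀ i : ℕ, α[i]? = β[i]? → τ[i]? = γ[i]?)
    (hright : ∀ i : ℕ, β[i]? = γ[i]? → τ[i]? = α[i]?) : MaltsevListCond α β γ τ :=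
  ⟨fun i _ ha hb hc => (hleft i (ha.trans hb.symm)).trans hc, hleft, hright⟩

theorem maltsevListCond_zipWith3 {h : A → A → A → A} (hh : IsMaltsevOperation h)
    {α β γ : List A} (hβ : β.length = α.length) (hγ : γ.length = α.length) :
    MaltsevListCond α β γ (zipWith3 h α β γ) := by
  refine .of_left_of_right (fun i hαβ => ?_) (fun i hβγ => ?_) <;>
    rcases getElem?_eq_none_or_exists_of_length_eq hβ hγ i with
      ⟨ha, -, hc⟩ | ⟨a, b, c, ha, hb, hc⟩
  · simp [getElem?_zipWith3, ha, hc]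
  · obtain rfl : a = b := Option.some_injective _ (ha.symm.trans (hαβ.trans hb))
    rw [getElem?_zipWith3_of_eq_some ha hb hc, hc, (hh c a).2]
  · simp [getElem?_zipWith3, ha]
  · obtain rfl : b = c := Option.some_injective _ (hb.symm.trans (hβγ.trans hc))
    rw [getElem?_zipWith3_of_eq_some ha hb hc, ha, (hh a b).1]

theorem sig_inter_subset_sig_zipWith3 (h : A → A → A → A) (α β γ α' β' γ' : List A) :
    Sig α α' ∩ Sig β β' ∩ Sig γ γ' ⊆ Sig (zipWith3 h α β γ) (zipWith3 h α' β' γ') := by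
  rintro ⟨i, j⟩ ⟨⟨⟨a, hα, hα'⟩, ⟨b, hβ, hβ'⟩⟩, ⟨c, hγ, hγ'⟩⟩
  exact ⟨h a b c, getElem?_zipWith3_of_eq_some hα hβ hγ, getElem?_zipWith3_of_eq_some hα' hβ' hγ'⟩

section ColumnOperation

variable {V : Type*} (α β γ : V → List A)

def ColumnAt (x : V) (i : ℕ) (a b c : A) : Prop :=
  (α x)[i]? = some a ∧ (β x)[i]? = some b ∧ (γ x)[i]? = some c

def ColumnConsistent (g : V → List A) : Prop :=
  ∀ ⦃x y : V⦄ ⦃i j : ℕ⦄ ⦃a b c : A⦄, ColumnAt α β γ x i a b c → ColumnAt α β γ y j a b c →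
    ∃ v, (g x)[i]? = some v ∧ (g y)[j]? = some v

open Classical in
noncomputable def columnOperation (g : V → List A) (a b c : A) : A :=
  if h : ∃ v x i, ColumnAt α β γ x i a b c ∧ (g x)[i]? = some v then h.choose
  else defaultMaltsevOperation a b c

variable {α β γ} {g : V → List A}

theorem columnConsistent_of_sig_inter_subset
    (hg : ∀ x y, (Sig (α x) (α y) ∩ Sig (β x) (β y) ∩ Sig (γ x) (γ y)).Nonempty →
      Sig (α x) (α y) ∩ Sig (β x) (β y) ∩ Sig (γ x) (γ y) ⊆ Sig (g x) (g y)) :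
    ColumnConsistent α β γ g := by
  intro x y i j a b c hx hy
  have hij : (i, j) ∈ Sig (α x) (α y) ∩ Sig (β x) (β y) ∩ Sig (γ x) (γ y) :=
    ⟨⟨⟨a, hx.1, hy.1⟩, ⟨b, hx.2.1, hy.2.1⟩⟩, ⟨c, hx.2.2, hy.2.2⟩⟩
  exact hg x y ⟨_, hij⟩ hij

theorem getElem?_eq_columnOperation (hg : ColumnConsistent α β γ g) {x : V} {i : ℕ} {a b c : A}
    (hx : ColumnAt α β γ x i a b c) : (g x)[i]? = some (columnOperation α β γ g a b c) := by
  obtain ⟨v, hv, -⟩ := hg hx hx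
  have hex : ∃ v x i, ColumnAt α β γ x i a b c ∧ (g x)[i]? = some v := ⟨v, x, i, hx, hv⟩
  obtain ⟨y, j, hy, hyv⟩ := hex.choose_spec
  obtain ⟨w, hxw, hyw⟩ := hg hx hy
  rw [columnOperation, dif_pos hex, hxw, ← hyw, hyv]

theorem columnOperation_eq_of_columnAt (hg : ColumnConsistent α β γ g) {x : V} {i : ℕ}
    {a b c t : A} (hx : ColumnAt α β γ x i a b c) (ht : (g x)[i]? = some t) :
    columnOperation α β γ g a b c = t :=
  Option.some_injective _ ((getElem?_eq_columnOperation hg hx).symm.trans ht)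

theorem columnOperation_of_not_exists_columnAt {a b c : A}
    (h : ¬∃ x i, ColumnAt α β γ x i a b c) :
    columnOperation α β γ g a b c = defaultMaltsevOperation a b c :=
  dif_neg fun ⟨_, x, i, hxi, _⟩ => h ⟨x, i, hxi⟩

theorem isMaltsevOperation_columnOperation (hg : ColumnConsistent α β γ g)
    (hL : ∀ x, MaltsevListCond (α x) (β x) (γ x) (g x)) :
    IsMaltsevOperation (columnOperation α β γ g) := by
  intro a b
  constructor
  · by_cases hex : ∃ x i, ColumnAt α β γ x i a b b
    · obtain ⟨x, i, hx⟩ := hex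
      exact columnOperation_eq_of_columnAt hg hx
        (((hL x).2.2 i (hx.2.1.trans hx.2.2.symm)).trans hx.1)
    · rw [columnOperation_of_not_exists_columnAt hex]
      exact (isMaltsevOperation_defaultMaltsevOperation a b).1
  · by_cases hex : ∃ x i, ColumnAt α β γ x i b b a
    · obtain ⟨x, i, hx⟩ := hex
      exact columnOperation_eq_of_columnAt hg hx
        (((hL x).2.1 i (hx.1.trans hx.2.1.symm)).trans hx.2.2)
    · rw [columnOperation_of_not_exists_columnAt hex]
      exact (isMaltsevOperation_defaultMaltsevOperation a b).2

theorem zipWith3_columnOperation (hg : ColumnConsistent α β γ g) {x : V}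
    (hL : MaltsevListCond (α x) (β x) (γ x) (g x))
    (hβ : (β x).length = (α x).length) (hγ : (γ x).length = (α x).length) :
    zipWith3 (columnOperation α β γ g) (α x) (β x) (γ x) = g x := by
  refine ext_getElem? fun i => ?_
  rcases getElem?_eq_none_or_exists_of_length_eq hβ hγ i with
    ⟨ha, hb, hc⟩ | ⟨a, b, c, ha, hb, hc⟩
  · rw [hL.2.1 i (ha.trans hb.symm), hc]
    simp [getElem?_zipWith3, ha]
  · rw [getElem?_zipWith3_of_eq_some ha hb hc, getElem?_eq_columnOperation hg ⟨ha, hb, hc⟩]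

end ColumnOperation

end Maltsev

/-- for a hypergraph `ℋ` partitioned into uniform parts `ℋ l`,
`ℋ` admits a Maltsev polymorphism iff the Maltsev-recognition instance `(G, H, L)`
admits an `L`-homomorphism.  Vertices of `G` are triples `(α,β,γ)` of hyperedges of a
common part `ℋ l`; `g` must send such a triple to some `τ ∈ ℋ l` satisfying the list
conditions, and whenever two triples are adjacent (the intersection of the three
signatures is nonempty) the images must be adjacent in `H` (that intersection is
contained in the signature of the images). -/
theorem maltsev_recognition_correct {ι A : Type*} (ℋ : ι → Set (List A))
    (huniform : ∀ l, ∀ τ ∈ ℋ l, ∀ τ' ∈ ℋ l, τ.length = τ'.length) :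
    (∃ h : A → A → A → A, (∀ a b : A, h a b b = a ∧ h b b a = a) ∧
      ∀ l, ∀ τ₁ ∈ ℋ l, ∀ τ₂ ∈ ℋ l, ∀ τ₃ ∈ ℋ l, List.zipWith3 h τ₁ τ₂ τ₃ ∈ ℋ l) ↔
    (∃ g : (x : {t : ι × List A × List A × List A //
          t.2.1 ∈ ℋ t.1 ∧ t.2.2.1 ∈ ℋ t.1 ∧ t.2.2.2 ∈ ℋ t.1}) → List A,
      (∀ x, g x ∈ ℋ x.val.1 ∧ MaltsevListCond x.val.2.1 x.val.2.2.1 x.val.2.2.2 (g x)) ∧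
      (∀ x y, (Sig x.val.2.1 y.val.2.1 ∩ Sig x.val.2.2.1 y.val.2.2.1 ∩
          Sig x.val.2.2.2 y.val.2.2.2).Nonempty →
        Sig x.val.2.1 y.val.2.1 ∩ Sig x.val.2.2.1 y.val.2.2.1 ∩
          Sig x.val.2.2.2 y.val.2.2.2 ⊆ Sig (g x) (g y))) := by
  constructor
  · rintro ⟨h, hh, hclosed⟩
    refine ⟨fun x => zipWith3 h x.val.2.1 x.val.2.2.1 x.val.2.2.2, ?_, fun x y _ => ?_⟩
    · rintro ⟨⟨l, τ₁, τ₂, τ₃⟩, h₁, h₂, h₃⟩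
      exact ⟨hclosed l τ₁ h₁ τ₂ h₂ τ₃ h₃,
        maltsevListCond_zipWith3 hh (huniform l τ₂ h₂ τ₁ h₁) (huniform l τ₃ h₃ τ₁ h₁)⟩
    · exact sig_inter_subset_sig_zipWith3 h _ _ _ _ _ _
  · rintro ⟨g, hg, hedge⟩
    have hcons := columnConsistent_of_sig_inter_subset hedge
    refine ⟨_, isMaltsevOperation_columnOperation hcons fun x => (hg x).2, ?_⟩
    intro l τ₁ h₁ τ₂ h₂ τ₃ h₃
    have hx := hg ⟨(l, τ₁, τ₂, τ₃), h₁, h₂, h₃⟩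
    rw [← zipWith3_columnOperation hcons hx.2 (huniform l τ₂ h₂ τ₁ h₁)
      (huniform l τ₃ h₃ τ₁ h₁)] at hx
    exact hx.1
end

section
/- There exist digraphs G, H and lists L satisfying the rectangle property for all pairs and all pair lists, yet admitting no Maltsev list polymorphism on G ×_L H^3. (Example 2 of the paper gives G on 4 vertices and H on 11 vertices witnessing this.) -/
section PairList

variable {VG VH : Type*} {AG : VG → VG → Prop} {AH : VH → VH → Prop} {L : VG → Set VH}

def IsListHom (AG : VG → VG → Prop) (AH : VH → VH → Prop) (L : VG → Set VH) (f : VG → VH) :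
    Prop :=
  (∀ x, f x ∈ L x) ∧ ∀ x y, AG x y → AH (f x) (f y)

theorem IsWalkOn.map {f : VG → VH} (hf : ∀ x y, AG x y → AH (f x) (f y)) {ℓ : ℕ}
    {ε : ℕ → Bool} {w : ℕ → VG} (hw : IsWalkOn AG ℓ ε w) : IsWalkOn AH ℓ ε (f ∘ w) := by
  intro i hi
  have := hw i hi
  split_ifs at this ⊢ <;> exact hf _ _ this

theorem IsListHom.inPairList {f : VG → VH} (hf : IsListHom AG AH L f) (x y : VG) :
    InPairList AG AH L x y (f x) (f y) :=
  fun _ _ w _ hw hx hy => ⟨f ∘ w, hw.map hf.2, fun i _ => hf.1 (w i), by simp [hx], by simp [hy]⟩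

variable (AG) in
def walkOrientation [DecidableRel AG] (w : ℕ → VG) : ℕ → Bool :=
  fun i => decide (AG (w i) (w (i + 1)))

theorem isWalkOn_walkOrientation [DecidableRel AG] {ℓ : ℕ} {w : ℕ → VG}
    (hw : ∀ i, AG (w i) (w (i + 1)) ∨ AG (w (i + 1)) (w i)) :
    IsWalkOn AG ℓ (walkOrientation AG w) w := by
  intro i _
  by_cases h : AG (w i) (w (i + 1)) <;> simp [walkOrientation, h, (hw i).resolve_left]

section Reach

variable [Fintype VH] [DecidableRel AH] [∀ x, DecidablePred (· ∈ L x)]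

variable (AH L) in
def walkReach (ε : ℕ → Bool) (w : ℕ → VG) (a : VH) : ℕ → Finset VH
  | 0 => ({a} : Finset VH).filter (· ∈ L (w 0))
  | i + 1 => Finset.univ.filter fun c => c ∈ L (w (i + 1)) ∧
      ∃ b ∈ walkReach ε w a i, if ε i then AH b c else AH c b

theorem mem_walkReach_of_isWalkOn {ℓ : ℕ} {ε : ℕ → Bool} {w : ℕ → VG} {p : ℕ → VH}
    (hp : IsWalkOn AH ℓ ε p) (hpL : ∀ i, i < ℓ → p i ∈ L (w i)) :
    ∀ i, i < ℓ → p i ∈ walkReach AH L ε w (p 0) i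
  | 0, h0 => Finset.mem_filter.2 ⟨Finset.mem_singleton_self _, hpL 0 h0⟩
  | i + 1, hi => by
    simp only [walkReach, Finset.mem_filter, Finset.mem_univ, true_and]
    exact ⟨hpL (i + 1) hi, p i, mem_walkReach_of_isWalkOn hp hpL i (by omega), hp i hi⟩

theorem InPairList.mem_walkReach {x y : VG} {a b : VH} (h : InPairList AG AH L x y a b)
    {n : ℕ} {ε : ℕ → Bool} {w : ℕ → VG} (hw : IsWalkOn AG (n + 1) ε w) (hx : w 0 = x)
    (hy : w n = y) : b ∈ walkReach AH L ε w a n := by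
  obtain ⟨p, hp, hpL, rfl, rfl⟩ := h (n + 1) ε w (by omega) hw hx hy
  exact mem_walkReach_of_isWalkOn hp hpL n (by omega)

end Reach

theorem inPairList_rectangle {ι : Type*} {σ : ι → VG → VH}
    (hσ : ∀ x y a b, InPairList AG AH L x y a b ↔ ∃ i, σ i x = a ∧ σ i y = b)
    (hinj : ∀ x, Function.Injective fun i => σ i x) {x y : VG} {a b c d : VH}
    (hac : InPairList AG AH L x y a c) (hbc : InPairList AG AH L x y b c)
    (hbd : InPairList AG AH L x y b d) : InPairList AG AH L x y a d := by
  obtain ⟨i, rfl, rfl⟩ := (hσ x y a c).1 hac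
  obtain ⟨j, rfl, hj⟩ := (hσ x y b _).1 hbc
  obtain ⟨k, hk, rfl⟩ := (hσ x y _ d).1 hbd
  obtain rfl : j = i := hinj y hj
  obtain rfl : k = j := hinj x hk
  exact (hσ x y _ _).2 ⟨k, rfl, rfl⟩

theorem IsMaltsevListPoly.exists_common_out_neighbor {h : VG → VH → VH → VH → VH}
    (hh : IsMaltsevListPoly AG AH L h) {x z y : VG} (hxy : AG x y) (hzy : AG z y)
    {a a' c c' e₁ e₂ e₃ : VH} (ha : a ∈ L x) (ha' : a' ∈ L x) (hc : c ∈ L z) (hc' : c' ∈ L z)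
    (he₁ : e₁ ∈ L y) (he₂ : e₂ ∈ L y) (he₃ : e₃ ∈ L y)
    (hae₁ : AH a e₁) (ha'e₂ : AH a' e₂) (ha'e₃ : AH a' e₃)
    (hc'e₁ : AH c' e₁) (hc'e₂ : AH c' e₂) (hce₃ : AH c e₃) :
    ∃ e ∈ L y, AH a e ∧ AH c e := by
  obtain ⟨hL, harc, hid⟩ := hh
  refine ⟨h y e₁ e₂ e₃, hL y _ _ _ he₁ he₂ he₃, ?_, ?_⟩
  · simpa only [(hid x a a' ha ha').1] using
      harc x y a a' a' e₁ e₂ e₃ hxy ha ha' ha' he₁ he₂ he₃ hae₁ ha'e₂ ha'e₃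
  · simpa only [(hid z c c' hc hc').2] using
      harc z y c' c' c e₁ e₂ e₃ hzy hc' hc' hc he₁ he₂ he₃ hc'e₁ hc'e₂ hce₃

end PairList

namespace Example2

/-- The oriented 4-cycle `0 → 1 ← 2 → 3 ← 0`. -/
abbrev cycleG : Fin 4 → Fin 4 → Prop := fun u v => u.val % 2 = 0 ∧ v.val % 2 = 1

abbrev graphH : Fin 11 → Fin 11 → Prop := fun a b =>
  (a, b) ∈ [(0, 2), (0, 3), (1, 4), (5, 2), (6, 3), (6, 4), (0, 7), (1, 8), (5, 7), (6, 8)]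

abbrev lists : Fin 4 → Set (Fin 11) := fun x =>
  ↑(![{0, 1}, {2, 3, 4}, {5, 6}, {7, 8}] x : Finset (Fin 11))

def copy : Fin 2 → Fin 4 → Fin 11 := ![![0, 2, 5, 7], ![1, 4, 6, 8]]

def cycleWalk (x s : Fin 4) : ℕ → Fin 4
  | 0 => x
  | i + 1 => cycleWalk x s i + s

theorem cycleWalk_adj (x : Fin 4) {s : Fin 4} (hs : s = 1 ∨ s = -1) (i : ℕ) :
    cycleG (cycleWalk x s i) (cycleWalk x s (i + 1)) ∨
      cycleG (cycleWalk x s (i + 1)) (cycleWalk x s i) := by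
  simp only [cycleWalk]
  generalize cycleWalk x s i = u
  revert u
  rcases hs with rfl | rfl <;> decide

theorem cycleWalk_end (x y : Fin 4) :
    cycleWalk x 1 (y - x).val = y ∧ cycleWalk x (-1) (4 - (y - x).val) = y := by
  revert x y; decide

theorem isListHom_copy : ∀ i, IsListHom cycleG graphH lists (copy i) := by
  unfold IsListHom; decide

theorem copy_injective (x : Fin 4) : Function.Injective fun i => copy i x := by
  revert x; decide

theorem walkReach_cycleWalk : ∀ (x y : Fin 4) (a b : Fin 11),
    b ∈ walkReach graphH lists (walkOrientation cycleG (cycleWalk x 1)) (cycleWalk x 1) a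
      (y - x).val →
    b ∈ walkReach graphH lists (walkOrientation cycleG (cycleWalk x (-1))) (cycleWalk x (-1)) a
      (4 - (y - x).val) →
    ∃ i, copy i x = a ∧ copy i y = b := by
  decide

theorem inPairList_iff (x y : Fin 4) (a b : Fin 11) :
    InPairList cycleG graphH lists x y a b ↔ ∃ i, copy i x = a ∧ copy i y = b := by
  refine ⟨fun h => walkReach_cycleWalk x y a b ?_ ?_, ?_⟩
  · exact h.mem_walkReach (isWalkOn_walkOrientation (cycleWalk_adj x (.inl rfl))) rfl
      (cycleWalk_end x y).1
  · exact h.mem_walkReach (isWalkOn_walkOrientation (cycleWalk_adj x (.inr rfl))) rfl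
      (cycleWalk_end x y).2
  · rintro ⟨i, rfl, rfl⟩
    exact (isListHom_copy i).inPairList x y

end Example2

/-- there is an instance (with `G` on 4 vertices and `H` on 11 vertices)
whose pair lists satisfy the rectangle property for all pairs, yet which admits no
Maltsev list polymorphism on `G ×_L H³`. -/
theorem exists_rectangular_no_maltsev :
    ∃ (AG : Fin 4 → Fin 4 → Prop) (AH : Fin 11 → Fin 11 → Prop)
      (L : Fin 4 → Set (Fin 11)),
      (∀ (x y : Fin 4) (a b : Fin 11) (c d : Fin 11),
        a ∈ L x → b ∈ L x → c ∈ L y → d ∈ L y →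
        InPairList AG AH L x y a c → InPairList AG AH L x y b c →
        InPairList AG AH L x y b d → InPairList AG AH L x y a d) ∧
      ¬ ∃ h, IsMaltsevListPoly AG AH L h := by
  open Example2 in
  refine ⟨cycleG, graphH, lists, fun x y a b c d _ _ _ _ =>
    inPairList_rectangle inPairList_iff copy_injective, ?_⟩
  rintro ⟨h, hh⟩
  refine absurd (hh.exists_common_out_neighbor (x := 0) (z := 2) (y := 1)
    (a := 1) (a' := 0) (c := 5) (c' := 6) (e₁ := 4) (e₂ := 3) (e₃ := 2)
    ?_ ?_ ?_ ?_ ?_ ?_ ?_ ?_ ?_ ?_ ?_ ?_ ?_ ?_ ?_) ?_ <;> decide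
end

section
/- Let H be a digraph with a Maltsev polymorphism h. For any vertex set partition of a walk situation: if there are directed walks of the same length and pattern from a to c, from b to c, and from b to d in H, then there is a directed walk of the same length and pattern from a to d in H. -/
/-
Apply the Maltsev polymorphism coordinatewise to the three walks a ⇝ c, b ⇝ c, b ⇝ d.
Since h is a polymorphism the result is again a walk of the same pattern, and the
Maltsev identities give its endpoints: h(a, b, b) = a and h(c, c, d) = d.
-/

theorem IsWalkOn.map₃ {V : Type*} {A : V → V → Prop} {f : V → V → V → V}
    (hf : ∀ a₁ a₂ a₃ b₁ b₂ b₃ : V, A a₁ b₁ → A a₂ b₂ → A a₃ b₃ →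
      A (f a₁ a₂ a₃) (f b₁ b₂ b₃))
    {ℓ : ℕ} {ε : ℕ → Bool} {w₁ w₂ w₃ : ℕ → V}
    (h₁ : IsWalkOn A ℓ ε w₁) (h₂ : IsWalkOn A ℓ ε w₂) (h₃ : IsWalkOn A ℓ ε w₃) :
    IsWalkOn A ℓ ε fun i => f (w₁ i) (w₂ i) (w₃ i) := by
  intro i hi
  have e₁ := h₁ i hi
  have e₂ := h₂ i hi
  have e₃ := h₃ i hi
  split_ifs at e₁ e₂ e₃ ⊢ <;> exact hf _ _ _ _ _ _ e₁ e₂ e₃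

theorem maltsev_walks_rectangular_general {V : Type*} (A : V → V → Prop) (h : V → V → V → V)
    (hhom : ∀ a₁ a₂ a₃ b₁ b₂ b₃ : V, A a₁ b₁ → A a₂ b₂ → A a₃ b₃ →
      A (h a₁ a₂ a₃) (h b₁ b₂ b₃))
    (hmal : ∀ a b : V, h a b b = a ∧ h b b a = a)
    (ℓ : ℕ) (ε : ℕ → Bool) (a b c d : V)
    (hac : ∃ w, IsWalkOn A ℓ ε w ∧ w 0 = a ∧ w (ℓ - 1) = c)
    (hbc : ∃ w, IsWalkOn A ℓ ε w ∧ w 0 = b ∧ w (ℓ - 1) = c)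
    (hbd : ∃ w, IsWalkOn A ℓ ε w ∧ w 0 = b ∧ w (ℓ - 1) = d) :
    ∃ w, IsWalkOn A ℓ ε w ∧ w 0 = a ∧ w (ℓ - 1) = d := by
  obtain ⟨w₁, hw₁, rfl, rfl⟩ := hac
  obtain ⟨w₂, hw₂, hw₂0, hw₂e⟩ := hbc
  obtain ⟨w₃, hw₃, hw₃0, rfl⟩ := hbd
  refine ⟨fun i => h (w₁ i) (w₂ i) (w₃ i), hw₁.map₃ hhom hw₂ hw₃, ?_, ?_⟩
  · simp only [hw₂0, hw₃0, (hmal _ _).1]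
  · simp only [hw₂e, (hmal _ _).2]

/-- in a digraph with a Maltsev polymorphism, if there are walks of the
same length and orientation pattern from `a` to `c`, from `b` to `c`, and from `b` to
`d`, then there is a walk of the same length and pattern from `a` to `d`. -/
theorem maltsev_walks_rectangular {V : Type*} (A : V → V → Prop) (h : V → V → V → V)
    (hhom : ∀ a₁ a₂ a₃ b₁ b₂ b₃ : V, A a₁ b₁ → A a₂ b₂ → A a₃ b₃ →
      A (h a₁ a₂ a₃) (h b₁ b₂ b₃))
    (hmal : ∀ a b : V, h a b b = a ∧ h b b a = a)
    (ℓ : ℕ) (hℓ : 1 ≤ ℓ) (ε : ℕ → Bool) (a b c d : V)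
    (hac : ∃ w, IsWalkOn A ℓ ε w ∧ w 0 = a ∧ w (ℓ - 1) = c)
    (hbc : ∃ w, IsWalkOn A ℓ ε w ∧ w 0 = b ∧ w (ℓ - 1) = c)
    (hbd : ∃ w, IsWalkOn A ℓ ε w ∧ w 0 = b ∧ w (ℓ - 1) = d) :
    ∃ w, IsWalkOn A ℓ ε w ∧ w 0 = a ∧ w (ℓ - 1) = d :=
  maltsev_walks_rectangular_general A h hhom hmal ℓ ε a b c d hac hbc hbd
end

section
/- Let G, H be digraphs, L lists admitting a Maltsev list polymorphism, with arc- and pair-consistent pair lists. For x ∈ V(G) and a ∈ L(x), define L_{x,a}(y) = {d : (a,d) ∈ L(x,y)}. Then for all a, b ∈ L(x) and y, z ∈ V(G): if c ∈ L_{x,a}(y) ∩ L_{x,b}(y) and (c,d) ∈ L_{x,a}(y,z) and (c,d') ∈ L_{x,b}(y,z) for some d, then {e : (c,e) ∈ L_{x,a}(y,z)} and {e : (c,e) ∈ L_{x,b}(y,z)} are either equal or disjoint. -/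
/-- The restricted lists `L_{x,a}`: `d ∈ L_{x,a}(y)` iff `d ∈ L(y)` and
`(a,d) ∈ L(x,y)`. -/
def Lxa {VG VH : Type*} (AG : VG → VG → Prop) (AH : VH → VH → Prop)
    (L : VG → Set VH) (x : VG) (a : VH) : VG → Set VH :=
  fun y => {d ∈ L y | InPairList AG AH L x y a d}

/-!
Apply the Maltsev polymorphism pointwise to three walks witnessing `(c,f)`, `(c,e)` in the
`a`-restricted lists and `(c,e)` in the `b`-restricted lists. At each vertex `v` of the walk
the three values are paired with `a, a, b` in `L(x,v)`, so the result is paired with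
`h x a a b = b`: the new walk runs in the `b`-restricted lists, from `h c c c = c` to
`h f e e = f`. Hence a common point `e` of the two fibres forces them to coincide.
-/

namespace IsMaltsevListPoly

variable {VG VH : Type*} {AG : VG → VG → Prop} {AH : VH → VH → Prop}
    {L : VG → Set VH} {h : VG → VH → VH → VH → VH}

theorem mem (hML : IsMaltsevListPoly AG AH L h) {v : VG} {d₁ d₂ d₃ : VH}
    (h₁ : d₁ ∈ L v) (h₂ : d₂ ∈ L v) (h₃ : d₃ ∈ L v) : h v d₁ d₂ d₃ ∈ L v :=
  hML.1 v d₁ d₂ d₃ h₁ h₂ h₃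

theorem apply_left (hML : IsMaltsevListPoly AG AH L h) {v : VG} {d e : VH}
    (hd : d ∈ L v) (he : e ∈ L v) : h v d e e = d :=
  (hML.2.2 v d e hd he).1

theorem apply_right (hML : IsMaltsevListPoly AG AH L h) {v : VG} {d e : VH}
    (hd : d ∈ L v) (he : e ∈ L v) : h v e e d = d :=
  (hML.2.2 v d e hd he).2

theorem isWalkOn_apply (hML : IsMaltsevListPoly AG AH L h) {ℓ : ℕ} {ε : ℕ → Bool}
    {w : ℕ → VG} (hw : IsWalkOn AG ℓ ε w) {p₁ p₂ p₃ : ℕ → VH}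
    (hp₁ : IsWalkOn AH ℓ ε p₁) (hp₂ : IsWalkOn AH ℓ ε p₂) (hp₃ : IsWalkOn AH ℓ ε p₃)
    (m₁ : ∀ i < ℓ, p₁ i ∈ L (w i)) (m₂ : ∀ i < ℓ, p₂ i ∈ L (w i))
    (m₃ : ∀ i < ℓ, p₃ i ∈ L (w i)) :
    IsWalkOn AH ℓ ε (fun i => h (w i) (p₁ i) (p₂ i) (p₃ i)) := by
  intro i hi
  have hi' : i < ℓ := by omega
  have arc := hML.2.1
  have hwi := hw i hi
  have h₁ := hp₁ i hi
  have h₂ := hp₂ i hi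
  have h₃ := hp₃ i hi
  cases hε : ε i <;> simp only [hε, Bool.false_eq_true, if_true, if_false] at hwi h₁ h₂ h₃ ⊢
  · exact arc _ _ _ _ _ _ _ _ hwi (m₁ _ hi) (m₂ _ hi) (m₃ _ hi)
      (m₁ i hi') (m₂ i hi') (m₃ i hi') h₁ h₂ h₃
  · exact arc _ _ _ _ _ _ _ _ hwi (m₁ i hi') (m₂ i hi') (m₃ i hi')
      (m₁ _ hi) (m₂ _ hi) (m₃ _ hi) h₁ h₂ h₃

theorem inPairList_apply (hML : IsMaltsevListPoly AG AH L h) {x y : VG}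
    {a₁ a₂ a₃ d₁ d₂ d₃ : VH} (h₁ : InPairList AG AH L x y a₁ d₁)
    (h₂ : InPairList AG AH L x y a₂ d₂) (h₃ : InPairList AG AH L x y a₃ d₃) :
    InPairList AG AH L x y (h x a₁ a₂ a₃) (h y d₁ d₂ d₃) := by
  intro ℓ ε w hℓ hw hw₀ hwℓ
  obtain ⟨q₁, hq₁, m₁, rfl, rfl⟩ := h₁ ℓ ε w hℓ hw hw₀ hwℓ
  obtain ⟨q₂, hq₂, m₂, rfl, rfl⟩ := h₂ ℓ ε w hℓ hw hw₀ hwℓ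
  obtain ⟨q₃, hq₃, m₃, rfl, rfl⟩ := h₃ ℓ ε w hℓ hw hw₀ hwℓ
  exact ⟨fun i => h (w i) (q₁ i) (q₂ i) (q₃ i), hML.isWalkOn_apply hw hq₁ hq₂ hq₃ m₁ m₂ m₃,
    fun i hi => hML.mem (m₁ i hi) (m₂ i hi) (m₃ i hi), by simp only [hw₀], by simp only [hwℓ]⟩

theorem apply_mem_Lxa (hML : IsMaltsevListPoly AG AH L h) {x : VG} {a b : VH}
    (ha : a ∈ L x) (hb : b ∈ L x) {v : VG} {d₁ d₂ d₃ : VH}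
    (h₁ : d₁ ∈ Lxa AG AH L x a v) (h₂ : d₂ ∈ Lxa AG AH L x a v)
    (h₃ : d₃ ∈ Lxa AG AH L x b v) : h v d₁ d₂ d₃ ∈ Lxa AG AH L x b v := by
  refine ⟨hML.mem h₁.1 h₂.1 h₃.1, ?_⟩
  simpa only [hML.apply_right hb ha] using hML.inPairList_apply h₁.2 h₂.2 h₃.2

theorem inPairList_of_common_endpoint {M M' : VG → Set VH} (hML : IsMaltsevListPoly AG AH L h)
    (hM : ∀ v, M v ⊆ L v) (hM' : ∀ v, M' v ⊆ L v)
    (hmix : ∀ v d₁ d₂ d₃, d₁ ∈ M v → d₂ ∈ M v → d₃ ∈ M' v → h v d₁ d₂ d₃ ∈ M' v)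
    {y z : VG} {c e f : VH} (hf : InPairList AG AH M y z c f)
    (he : InPairList AG AH M y z c e) (he' : InPairList AG AH M' y z c e) :
    InPairList AG AH M' y z c f := by
  intro ℓ ε w hℓ hw hw₀ hwℓ
  obtain ⟨p₁, hp₁, m₁, hp₁₀, hp₁ℓ⟩ := hf ℓ ε w hℓ hw hw₀ hwℓ
  obtain ⟨p₂, hp₂, m₂, hp₂₀, hp₂ℓ⟩ := he ℓ ε w hℓ hw hw₀ hwℓ
  obtain ⟨p₃, hp₃, m₃, hp₃₀, hp₃ℓ⟩ := he' ℓ ε w hℓ hw hw₀ hwℓ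
  have hc : c ∈ L (w 0) := hp₁₀ ▸ hM _ (m₁ 0 hℓ)
  have hfL : f ∈ L (w (ℓ - 1)) := hp₁ℓ ▸ hM _ (m₁ _ (by omega))
  have heL : e ∈ L (w (ℓ - 1)) := hp₂ℓ ▸ hM _ (m₂ _ (by omega))
  refine ⟨fun i => h (w i) (p₁ i) (p₂ i) (p₃ i),
    hML.isWalkOn_apply hw hp₁ hp₂ hp₃ (fun i hi => hM _ (m₁ i hi))
      (fun i hi => hM _ (m₂ i hi)) (fun i hi => hM' _ (m₃ i hi)),
    fun i hi => hmix _ _ _ _ (m₁ i hi) (m₂ i hi) (m₃ i hi), ?_, ?_⟩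
  · simp only [hp₁₀, hp₂₀, hp₃₀, hML.apply_left hc hc]
  · simp only [hp₁ℓ, hp₂ℓ, hp₃ℓ, hML.apply_left hfL heL]

end IsMaltsevListPoly

theorem restricted_pair_lists_equal_or_disjoint_general {VG VH : Type*}
    (AG : VG → VG → Prop) (AH : VH → VH → Prop)
    (L : VG → Set VH) (h : VG → VH → VH → VH → VH)
    (hML : IsMaltsevListPoly AG AH L h)
    (x : VG) (a b : VH) (ha : a ∈ L x) (hb : b ∈ L x)
    (y z : VG) (c : VH) :
    {e | InPairList AG AH (Lxa AG AH L x a) y z c e} =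
      {e | InPairList AG AH (Lxa AG AH L x b) y z c e} ∨
    Disjoint {e | InPairList AG AH (Lxa AG AH L x a) y z c e}
      {e | InPairList AG AH (Lxa AG AH L x b) y z c e} := by
  have hL : ∀ a v, Lxa AG AH L x a v ⊆ L v := fun _ _ _ hd => hd.1
  refine or_iff_not_imp_right.mpr fun hnd => ?_
  obtain ⟨e, hea, heb⟩ := Set.not_disjoint_iff.mp hnd
  ext f
  exact ⟨fun hf => hML.inPairList_of_common_endpoint (hL a) (hL b)
      (fun _ _ _ _ => hML.apply_mem_Lxa ha hb) hf hea heb,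
    fun hf => hML.inPairList_of_common_endpoint (hL b) (hL a)
      (fun _ _ _ _ => hML.apply_mem_Lxa hb ha) hf heb hea⟩

/-- with a Maltsev list polymorphism on `G ×_L H³`, for `a, b ∈ L(x)`,
`c ∈ L_{x,a}(y) ∩ L_{x,b}(y)`, if `(c,d) ∈ L_{x,a}(y,z)` and `(c,d') ∈ L_{x,b}(y,z)`
for some `d, d'`, then the fibers `{e : (c,e) ∈ L_{x,a}(y,z)}` and
`{e : (c,e) ∈ L_{x,b}(y,z)}` are either equal or disjoint. -/
theorem restricted_pair_lists_equal_or_disjoint {VG VH : Type*}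
    (AG : VG → VG → Prop) (AH : VH → VH → Prop)
    (L : VG → Set VH) (h : VG → VH → VH → VH → VH)
    (hML : IsMaltsevListPoly AG AH L h)
    (x : VG) (a b : VH) (ha : a ∈ L x) (hb : b ∈ L x)
    (y z : VG) (c : VH)
    (hca : c ∈ Lxa AG AH L x a y) (hcb : c ∈ Lxa AG AH L x b y)
    (d d' : VH)
    (hd : InPairList AG AH (Lxa AG AH L x a) y z c d)
    (hd' : InPairList AG AH (Lxa AG AH L x b) y z c d') :
    {e | InPairList AG AH (Lxa AG AH L x a) y z c e} =
      {e | InPairList AG AH (Lxa AG AH L x b) y z c e} ∨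
    Disjoint {e | InPairList AG AH (Lxa AG AH L x a) y z c e}
      {e | InPairList AG AH (Lxa AG AH L x b) y z c e} :=
  restricted_pair_lists_equal_or_disjoint_general AG AH L h hML x a b ha hb y z c
end
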